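/- arXiv:1901.10165 — 4 statements merged into one kernel-verified Lean document; each statement's English description precedes it below -/
import Mathlib

section
/- Let # and $ be two characters not occurring in the string T over alphabet Σ, and let T' = #·T·$. Let W be a nonempty string over Σ and let c, b be characters. If cW occurs in T' and Wb occurs in T', but cWb does not occur in T', then W is a maximal repeat of T': there exist characters b' ≠ b with Wb' occurring in T', and c' ≠ c with c'W occurring in T'. In particular W is both left-maximal and right-maximal in T'. -/
/-- Number of (factor) occurrences of `W` in `T`: the number of starting
positions `i` such that `W` is a prefix of `T.drop i`. -/
def occ {α : Type*} [DecidableEq α] (T W : List α) : ℕ :=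
  (List.range (T.length + 1)).countP fun i => decide (W <+: T.drop i)

/-- `W` is right-maximal in `T`: at least two distinct right extensions occur. -/
def rightMax {α : Type*} (T W : List α) : Prop :=
  ∃ b c, b ≠ c ∧ (W ++ [b]) <:+: T ∧ (W ++ [c]) <:+: T

/-- `W` is left-maximal in `T`: at least two distinct left extensions occur. -/
def leftMax {α : Type*} (T W : List α) : Prop :=
  ∃ a c, a ≠ c ∧ (a :: W) <:+: T ∧ (c :: W) <:+: T

/-!
An occurrence of `cW` in `#T$` is not a suffix, since its last letter lies in `W` and so is
not `$`; hence it is followed by some letter `e`, and `e ≠ b` because `cWb` does not occur.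
Symmetrically, an occurrence of `Wb` is not a prefix and is preceded by some `f ≠ c`; this
case is the first one applied to the reversed text.
-/

namespace List

variable {α : Type*}

theorem IsInfix.exists_append_singleton_infix {X Y L : List α} {d : α}
    (h : X ++ Y <:+: L ++ [d]) (hY : Y ≠ []) (hd : d ∉ Y) :
    ∃ e, X ++ Y ++ [e] <:+: L ++ [d] := by
  obtain ⟨u, v, huv⟩ := h
  cases v with
  | cons e v => exact ⟨e, u, v, by simpa using huv⟩
  | nil =>
    obtain ⟨y, hy⟩ := Option.isSome_iff_exists.mp (getLast?_isSome.mpr hY)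
    have hyd : y = d := by simpa [getLast?_append, hy] using congrArg getLast? huv
    exact absurd (hyd ▸ mem_of_getLast? hy) hd

theorem exists_ne_append_singleton_infix_of_not_infix {W L : List α} {c b d : α}
    (hW : W ≠ []) (hd : d ∉ W) (hcW : c :: W <:+: L ++ [d])
    (hcWb : ¬ c :: (W ++ [b]) <:+: L ++ [d]) : ∃ e ≠ b, W ++ [e] <:+: L ++ [d] := by
  obtain ⟨e, he⟩ := IsInfix.exists_append_singleton_infix (X := [c]) hcW hW hd
  refine ⟨e, ?_, (infix_cons (infix_refl _)).trans (by simpa using he)⟩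
  rintro rfl
  exact hcWb (by simpa using he)

theorem exists_ne_cons_infix_of_not_infix {W L : List α} {c b d : α}
    (hW : W ≠ []) (hd : d ∉ W) (hWb : W ++ [b] <:+: d :: L)
    (hcWb : ¬ c :: (W ++ [b]) <:+: d :: L) : ∃ f ≠ c, f :: W <:+: d :: L := by
  obtain ⟨f, hfc, hf⟩ := exists_ne_append_singleton_infix_of_not_infix (L := L.reverse)
    (reverse_ne_nil_iff.mpr hW) (by simpa using hd) (by simpa using reverse_infix.mpr hWb)
    (fun h => hcWb (reverse_infix.mp (by simpa using h)))
  exact ⟨f, hfc, reverse_infix.mp (by simpa using hf)⟩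

end List

theorem maximal_repeat_of_mismatch_general {α : Type*} (T W : List α)
    (hash dol : α)
    (hW : W ≠ []) (hWsig : ∀ x ∈ W, x ≠ hash ∧ x ≠ dol)
    (c b : α)
    (h1 : (c :: W) <:+: (hash :: T ++ [dol]))
    (h2 : (W ++ [b]) <:+: (hash :: T ++ [dol]))
    (h3 : ¬ (c :: (W ++ [b])) <:+: (hash :: T ++ [dol])) :
    (∃ b' : α, b' ≠ b ∧ (W ++ [b']) <:+: (hash :: T ++ [dol])) ∧
    (∃ c' : α, c' ≠ c ∧ (c' :: W) <:+: (hash :: T ++ [dol])) ∧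
    leftMax (hash :: T ++ [dol]) W ∧ rightMax (hash :: T ++ [dol]) W := by
  have hdol : dol ∉ W := fun h => (hWsig _ h).2 rfl
  have hhash : hash ∉ W := fun h => (hWsig _ h).1 rfl
  obtain ⟨e, heb, he⟩ := List.exists_ne_append_singleton_infix_of_not_infix hW hdol h1 h3
  obtain ⟨f, hfc, hf⟩ := List.exists_ne_cons_infix_of_not_infix (L := T ++ [dol]) hW hhash h2 h3
  exact ⟨⟨e, heb, he⟩, ⟨f, hfc, hf⟩, ⟨f, c, hfc, hf, h1⟩, ⟨e, b, heb, he, h2⟩⟩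

/-- with sentinels `#`,`$` not occurring in `T`, and
`T' = # · T · $`, if `cW` and `Wb` occur in `T'` but `cWb` does not,
then `W` is a maximal repeat of `T'`. -/
theorem maximal_repeat_of_mismatch {α : Type*} (T W : List α)
    (hash dol : α) (hh : hash ∉ T) (hd : dol ∉ T) (hhd : hash ≠ dol)
    (hW : W ≠ []) (hWsig : ∀ x ∈ W, x ≠ hash ∧ x ≠ dol)
    (c b : α)
    (h1 : (c :: W) <:+: (hash :: T ++ [dol]))
    (h2 : (W ++ [b]) <:+: (hash :: T ++ [dol]))
    (h3 : ¬ (c :: (W ++ [b])) <:+: (hash :: T ++ [dol])) :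
    (∃ b' : α, b' ≠ b ∧ (W ++ [b']) <:+: (hash :: T ++ [dol])) ∧
    (∃ c' : α, c' ≠ c ∧ (c' :: W) <:+: (hash :: T ++ [dol])) ∧
    leftMax (hash :: T ++ [dol]) W ∧ rightMax (hash :: T ++ [dol]) W :=
  maximal_repeat_of_mismatch_general T W hash dol hW hWsig c b h1 h2 h3
end

section
/- Let T' = #·T·$ with sentinels #, $ ∉ Σ. If W is a nonempty string over Σ that is right-maximal in T', then there exists a (possibly empty) string V such that VW is left-maximal in T', the number of occurrences of VW in T' equals the number of occurrences of W in T', and Σ^r_{T'}(VW) = Σ^r_{T'}(W). Consequently VW is a maximal repeat of T'. -/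
/-!
Since `#` occurs in `#T$` only at position `0`, a nonempty string occurring at least twice never
starts there, so each of its occurrences is preceded by a letter. If `X` is not left-maximal, all
these letters are one and the same `a`, and the occurrences of `aX` are exactly the occurrences
of `X` shifted by one: `aX` has the same number of occurrences and the same right extensions as
`X`. Iterating this left extension strictly increases the length, and it has to stop (at a
left-maximal string) before the length of `#T$` is reached.
-/

namespace List

variable {α : Type*}

theorem infix_iff_exists_prefix_drop {X T : List α} :
    X <:+: T ↔ ∃ i ≤ T.length, X <+: T.drop i := by
  constructor
  · rintro ⟨s, t, rfl⟩
    refine ⟨s.length, by simp, t, ?_⟩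
    simp
  · rintro ⟨i, -, h⟩
    exact h.isInfix.trans (drop_suffix i T).isInfix

theorem IsPrefix.of_cons_of_drop {X T : List α} {a : α} {i : ℕ}
    (h : (a :: X) <+: T.drop i) : X <+: T.drop (i + 1) := by
  rw [← tail_drop]
  obtain ⟨t, ht⟩ := h
  exact ⟨t, by rw [← ht]; rfl⟩

theorem exists_cons_prefix_drop {X T : List α} {i : ℕ} (hX : X ≠ [])
    (h : X <+: T.drop (i + 1)) : ∃ c, (c :: X) <+: T.drop i := by
  rw [← tail_drop] at h
  rcases hd : T.drop i with _ | ⟨c, t⟩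
  · rw [hd] at h
    exact absurd (prefix_nil.mp h) hX
  · rw [hd] at h
    exact ⟨c, cons_prefix_cons.mpr ⟨rfl, h⟩⟩

end List

section LeftSaturation

open List

variable {α : Type*}

def AlwaysPrecededBy (a : α) (X T : List α) : Prop :=
  ¬ X <+: T ∧ ∀ i, X <+: T.drop (i + 1) → T.drop i = a :: T.drop (i + 1)

theorem exists_alwaysPrecededBy_of_not_leftMax {X T : List α} (hX : X ≠ []) (hocc : X <:+: T)
    (hpre : ¬ X <+: T) (hl : ¬ leftMax T X) : ∃ a, AlwaysPrecededBy a X T := by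
  have hpred : ∀ i, X <+: T.drop (i + 1) → ∃ c, (c :: X) <+: T.drop i ∧ (c :: X) <:+: T :=
    fun i hi => (exists_cons_prefix_drop hX hi).imp fun c hc =>
      ⟨hc, hc.isInfix.trans (drop_suffix i T).isInfix⟩
  obtain ⟨j, -, hj⟩ := infix_iff_exists_prefix_drop.mp hocc
  obtain _ | i₀ := j
  · exact absurd hj hpre
  obtain ⟨a, -, ha⟩ := hpred i₀ hj
  refine ⟨a, hpre, fun i hi => ?_⟩
  obtain ⟨c, ⟨t, ht⟩, hcT⟩ := hpred i hi
  obtain rfl : c = a := by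
    by_contra hne
    exact hl ⟨c, a, hne, hcT, ha⟩
  rw [← tail_drop, ← ht, cons_append, tail_cons]

namespace AlwaysPrecededBy

variable {a : α} {X T : List α}

theorem cons_prefix_drop_iff (h : AlwaysPrecededBy a X T) (Y : List α) (i : ℕ) :
    (a :: (X ++ Y)) <+: T.drop i ↔ X ++ Y <+: T.drop (i + 1) := by
  refine ⟨IsPrefix.of_cons_of_drop, fun hXY => ?_⟩
  rw [h.2 i ((prefix_append X Y).trans hXY)]
  exact cons_prefix_cons.mpr ⟨rfl, hXY⟩

theorem cons_infix_iff (h : AlwaysPrecededBy a X T) (Y : List α) :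
    (a :: (X ++ Y)) <:+: T ↔ X ++ Y <:+: T := by
  refine ⟨(suffix_cons a _).isInfix.trans, fun hXY => ?_⟩
  obtain ⟨j, hj, hpre⟩ := infix_iff_exists_prefix_drop.mp hXY
  obtain _ | i := j
  · exact absurd ((prefix_append X Y).trans hpre) h.1
  · exact infix_iff_exists_prefix_drop.mpr ⟨i, by omega, (h.cons_prefix_drop_iff Y i).mpr hpre⟩

theorem occ_cons_eq [DecidableEq α] (h : AlwaysPrecededBy a X T) :
    occ T (a :: X) = occ T X := by
  have hshift := h.cons_prefix_drop_iff []
  simp only [append_nil] at hshift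
  unfold occ
  conv_lhs => rw [range_succ, countP_append]
  conv_rhs => rw [range_succ_eq_map, countP_cons, countP_map]
  simp only [countP_singleton, drop_length, drop_zero, h.1, Function.comp_def]
  simp [hshift]

end AlwaysPrecededBy

variable [DecidableEq α]

theorem occ_pos_iff {T X : List α} : 0 < occ T X ↔ X <:+: T := by
  simp only [occ, countP_pos_iff, mem_range, decide_eq_true_eq, Nat.lt_succ_iff,
    infix_iff_exists_prefix_drop]

theorem occ_cons (c : α) (T X : List α) :
    occ (c :: T) X = (if X <+: c :: T then 1 else 0) + occ T X := by
  simp only [occ, length_cons, range_succ_eq_map, countP_cons, countP_map, drop_zero,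
    Function.comp_def, drop_succ_cons, decide_eq_true_eq]
  omega

theorem two_le_occ_of_rightMax {T W : List α} (h : rightMax T W) : 2 ≤ occ T W := by
  obtain ⟨b, c, hbc, hb, hc⟩ := h
  obtain ⟨i, hi, hib⟩ := infix_iff_exists_prefix_drop.mp hb
  obtain ⟨j, hj, hjc⟩ := infix_iff_exists_prefix_drop.mp hc
  have hij : i ≠ j := by
    rintro rfl
    have := prefix_of_prefix_length_le hib hjc (by simp)
    simp_all
  have hsub : [i, j] ⊆ (range (T.length + 1)).filter fun k => decide (W <+: T.drop k) := by
    simp [hi, hj, (prefix_append W [b]).trans hib, (prefix_append W [c]).trans hjc]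
  have := (subperm_of_subset (by simpa using hij) hsub).length_le
  simpa [occ, countP_eq_length_filter] using this

theorem not_prefix_of_two_le_occ {hash : α} {S X : List α} (hS : hash ∉ S) (hX : X ≠ [])
    (hocc : 2 ≤ occ (hash :: S) X) : ¬ X <+: hash :: S := by
  intro hpre
  obtain ⟨X', rfl⟩ : ∃ X', X = hash :: X' := by
    rcases prefix_cons_iff.mp hpre with h | ⟨t, h, -⟩
    · exact absurd h hX
    · exact ⟨t, h⟩
  have hS0 : occ S (hash :: X') = 0 :=
    Nat.eq_zero_of_not_pos fun h => hS ((occ_pos_iff.mp h).subset mem_cons_self)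
  rw [occ_cons, if_pos hpre, hS0] at hocc
  omega

theorem exists_leftMax_extension {hash : α} {S X : List α} (hS : hash ∉ S) (hX : X ≠ [])
    (hocc : 2 ≤ occ (hash :: S) X) :
    ∃ V, leftMax (hash :: S) (V ++ X) ∧ occ (hash :: S) (V ++ X) = occ (hash :: S) X ∧
      ∀ Y, (V ++ X ++ Y) <:+: hash :: S ↔ X ++ Y <:+: hash :: S := by
  by_cases hl : leftMax (hash :: S) X
  · exact ⟨[], hl, rfl, fun _ => Iff.rfl⟩
  have hX_infix : X <:+: hash :: S := occ_pos_iff.mp (by omega)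
  obtain ⟨a, ha⟩ := exists_alwaysPrecededBy_of_not_leftMax hX hX_infix
    (not_prefix_of_two_le_occ hS hX hocc) hl
  have hlen : (a :: X).length ≤ (hash :: S).length :=
    ((ha.cons_infix_iff []).mpr (by simpa using hX_infix)).length_le.trans_eq' (by simp)
  obtain ⟨V, hV, hVocc, hVext⟩ :=
    exists_leftMax_extension hS (cons_ne_nil a X) (by rwa [ha.occ_cons_eq])
  refine ⟨V ++ [a], by simpa using hV, by simpa [ha.occ_cons_eq] using hVocc, fun Y => ?_⟩
  simpa using (hVext Y).trans (ha.cons_infix_iff Y)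
termination_by (hash :: S).length - X.length
decreasing_by simp only [length_cons] at hlen ⊢; omega

end LeftSaturation

theorem left_saturate_rightMax_general {α : Type*} [DecidableEq α]
    (T W : List α) (hash dol : α)
    (hh : hash ∉ T) (hhd : hash ≠ dol)
    (hW : W ≠ [])
    (hrm : rightMax (hash :: T ++ [dol]) W) :
    ∃ V : List α,
      leftMax (hash :: T ++ [dol]) (V ++ W) ∧
      occ (hash :: T ++ [dol]) (V ++ W) = occ (hash :: T ++ [dol]) W ∧
      (∀ b : α, ((V ++ W) ++ [b]) <:+: (hash :: T ++ [dol]) ↔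
        (W ++ [b]) <:+: (hash :: T ++ [dol])) ∧
      rightMax (hash :: T ++ [dol]) (V ++ W) := by
  have hS : hash ∉ T ++ [dol] := by simp [hh, hhd]
  obtain ⟨V, hV, hocc, hext⟩ := exists_leftMax_extension hS hW (two_le_occ_of_rightMax hrm)
  obtain ⟨b, c, hbc, hb, hc⟩ := hrm
  exact ⟨V, hV, hocc, fun b => hext [b], b, c, hbc, (hext [b]).mpr hb, (hext [c]).mpr hc⟩

/-- with `T' = # · T · $`, every nonempty right-maximal `W` over
`Σ` has a left extension `VW` that is left-maximal, has the same number of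
occurrences, and the same right extensions; hence `VW` is a maximal repeat. -/
theorem left_saturate_rightMax {α : Type*} [DecidableEq α]
    (T W : List α) (hash dol : α)
    (hh : hash ∉ T) (hd : dol ∉ T) (hhd : hash ≠ dol)
    (hW : W ≠ []) (hWsig : ∀ x ∈ W, x ≠ hash ∧ x ≠ dol)
    (hrm : rightMax (hash :: T ++ [dol]) W) :
    ∃ V : List α,
      leftMax (hash :: T ++ [dol]) (V ++ W) ∧
      occ (hash :: T ++ [dol]) (V ++ W) = occ (hash :: T ++ [dol]) W ∧
      (∀ b : α, ((V ++ W) ++ [b]) <:+: (hash :: T ++ [dol]) ↔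
        (W ++ [b]) <:+: (hash :: T ++ [dol])) ∧
      rightMax (hash :: T ++ [dol]) (V ++ W) :=
  left_saturate_rightMax_general T W hash dol hh hhd hW hrm
end

section
/- Let T' = #·T·$ with sentinels #, $ ∉ Σ. For every nonempty string W over Σ occurring at least twice in T', there exist (possibly empty) strings U and V such that UWV is a maximal repeat of T' and the number of occurrences of UWV in T' equals the number of occurrences of W in T'. -/
/-! If a repeat `X` is not right-maximal, all its occurrences are followed by one and the same
letter `b`: none of them can end at the sentinel `$`, which occurs only once, at the end, while
`X` occurs twice. Hence `X b` has exactly the occurrences of `X`, and every left extension of `X`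
extends to one of `X b`, so left-maximality survives. Iterating gives a right-maximal extension
with the same occurrences. Extending to the left is extending to the right in the reversed
text, whose last letter is the unique `#`; this step keeps right-maximality, and reversal
preserves occurrence counts. -/

open Finset

section Repeats

variable {α : Type*} {s X y : List α} {b d : α}

theorem infix_of_prefix_drop {i : ℕ} (h : X <+: s.drop i) : X <:+: s :=
  h.isInfix.trans (s.drop_suffix i).isInfix

theorem exists_prefix_drop_of_infix (h : X <:+: s) : ∃ i, X <+: s.drop i := by
  obtain ⟨u, v, rfl⟩ := h
  exact ⟨u.length, v, by simp⟩

theorem eq_nil_of_append_cons_eq_append_singleton {A t : List α} (hd : d ∉ y)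
    (h : A ++ d :: t = y ++ [d]) : t = [] := by
  obtain rfl | ⟨t', f, rfl⟩ := t.eq_nil_or_concat
  · rfl
  · rw [List.concat_eq_append, ← List.cons_append, ← List.append_assoc,
      List.append_singleton_inj] at h
    exact absurd (h.1 ▸ by simp) hd

theorem exists_forall_prefix_drop_append_singleton (hr : ¬ rightMax s X)
    (hnext : ∀ i, X <+: s.drop i → ∃ c, X ++ [c] <+: s.drop i) {i₀ : ℕ}
    (hi₀ : X <+: s.drop i₀) : ∃ b, ∀ i, X <+: s.drop i → X ++ [b] <+: s.drop i := by
  obtain ⟨b, hb⟩ := hnext i₀ hi₀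
  refine ⟨b, fun i hi => ?_⟩
  obtain ⟨c, hc⟩ := hnext i hi
  obtain rfl | hbc := eq_or_ne b c
  · exact hc
  · exact absurd ⟨b, c, hbc, infix_of_prefix_drop hb, infix_of_prefix_drop hc⟩ hr

theorem leftMax_append_singleton (h : ∀ i, X <+: s.drop i → X ++ [b] <+: s.drop i)
    (hl : leftMax s X) : leftMax s (X ++ [b]) := by
  have extend : ∀ a, a :: X <:+: s → a :: (X ++ [b]) <:+: s := fun a ha => by
    obtain ⟨i, hi⟩ := exists_prefix_drop_of_infix ha
    have hdrop : s.drop i = a :: s.drop (i + 1) := by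
      obtain ⟨t, ht⟩ := hi
      rw [← List.drop_drop, ← ht]
      simp
    rw [hdrop, List.cons_prefix_cons] at hi
    exact infix_of_prefix_drop (i := i) (hdrop ▸ List.cons_prefix_cons.2 ⟨rfl, h _ hi.2⟩)
  obtain ⟨a, c, hac, ha, hc⟩ := hl
  exact ⟨a, c, hac, extend a ha, extend c hc⟩

theorem rightMax_reverse : rightMax s.reverse X.reverse ↔ leftMax s X := by
  simp only [rightMax, leftMax, ← List.reverse_cons, List.reverse_infix]

theorem leftMax_reverse : leftMax s.reverse X.reverse ↔ rightMax s X := by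
  simpa using (rightMax_reverse (s := s.reverse) (X := X.reverse)).symm

theorem reverse_prefix_drop_reverse {i : ℕ} (hi : i ≤ s.length) (h : X <+: s.drop i) :
    i + X.length ≤ s.length ∧ X.reverse <+: s.reverse.drop (s.length - X.length - i) := by
  obtain ⟨t, ht⟩ := h
  obtain ⟨u, rfl, rfl⟩ : ∃ u, u.length = i ∧ s = u ++ X ++ t :=
    ⟨s.take i, by simpa using hi, by rw [List.append_assoc, ht, List.take_append_drop]⟩
  refine ⟨by simp, ?_⟩
  simp only [List.reverse_append, List.length_append, List.append_assoc]
  rw [List.drop_left' (by simp; omega)]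
  exact X.reverse.prefix_append _

variable [DecidableEq α]

theorem occ_eq_card : occ s X = #{i ∈ Finset.range (s.length + 1) | X <+: s.drop i} := by
  rw [occ, List.countP_eq_length_filter]
  rfl

theorem exists_ne_prefix_drop_of_two_le_occ (h : 2 ≤ occ s X) (i : ℕ) :
    ∃ j ≠ i, X <+: s.drop j := by
  by_contra! hall
  have : occ s X ≤ 1 := by
    rw [occ_eq_card]
    refine Finset.card_le_one.2 fun j hj k hk => ?_
    rw [Finset.mem_filter] at hj hk
    rw [not_imp_not.1 (hall j) hj.2, not_imp_not.1 (hall k) hk.2]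
  omega

theorem occ_append_singleton (h : ∀ i, X <+: s.drop i → X ++ [b] <+: s.drop i) :
    occ s (X ++ [b]) = occ s X :=
  List.countP_congr fun i _ => by
    simpa using ⟨fun hb => (X.prefix_append [b]).trans hb, h i⟩

theorem occ_reverse : occ s.reverse X.reverse = occ s X := by
  rw [occ_eq_card, occ_eq_card]
  have mirror : ∀ {s X : List α} {i : ℕ}, i ∈ Finset.range (s.length + 1) ∧ X <+: s.drop i →
      i + X.length ≤ s.length ∧ s.length - X.length - i ∈ Finset.range (s.reverse.length + 1) ∧
        X.reverse <+: s.reverse.drop (s.length - X.length - i) := fun ⟨hi, h⟩ => by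
    rw [Finset.mem_range, Nat.lt_succ_iff] at hi
    have := reverse_prefix_drop_reverse hi h
    exact ⟨this.1, by simp; omega, this.2⟩
  refine Finset.card_nbij' (fun i => s.length - X.length - i) (fun i => s.length - X.length - i)
    ?_ ?_ ?_ ?_
  all_goals intro i hi
  all_goals simp only [Finset.coe_filter, Set.mem_ofPred_eq] at hi ⊢
  · simpa using (mirror hi).2
  · exact (mirror hi).2
  · have := (mirror hi).1
    simp at this
    omega
  · have := (mirror hi).1
    omega

theorem exists_append_singleton_prefix_drop (hs : s = y ++ [d]) (hd : d ∉ y) (hX : X ≠ [])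
    (hocc : 2 ≤ occ s X) {i : ℕ} (hi : X <+: s.drop i) : ∃ c, X ++ [c] <+: s.drop i := by
  obtain ⟨t, ht⟩ := hi
  cases t with
  | cons c t => exact ⟨c, t, by simp [← ht]⟩
  | nil =>
    exfalso
    obtain ⟨j, hji, t', hj⟩ := exists_ne_prefix_drop_of_two_le_occ hocc i
    obtain ⟨X', e, rfl⟩ := (X.eq_nil_or_concat).resolve_left hX
    have he : e = d := by
      have := s.take_append_drop i
      rw [← ht, List.append_nil, List.concat_eq_append, ← List.append_assoc, hs,
        List.append_singleton_inj] at this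
      exact this.2
    subst he
    have ht' : t' = [] := by
      have := s.take_append_drop j
      rw [← hj, List.concat_eq_append, List.append_assoc, List.singleton_append,
        ← List.append_assoc, hs] at this
      exact eq_nil_of_append_cons_eq_append_singleton hd this
    subst ht'
    have hli := congrArg List.length ht
    have hlj := congrArg List.length hj
    simp only [List.length_append, List.length_concat, List.length_drop, List.length_nil] at hli hlj
    omega

theorem exists_rightMax_extension (hs : s = y ++ [d]) (hd : d ∉ y) (X : List α) (hX : X ≠ [])
    (hocc : 2 ≤ occ s X) :
    ∃ V, rightMax s (X ++ V) ∧ occ s (X ++ V) = occ s X ∧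
      (leftMax s X → leftMax s (X ++ V)) := by
  by_cases hr : rightMax s X
  · exact ⟨[], by simpa using hr, by simp, by simp⟩
  obtain ⟨i₀, -, hi₀⟩ := exists_ne_prefix_drop_of_two_le_occ hocc 0
  obtain ⟨b, hb⟩ := exists_forall_prefix_drop_append_singleton hr
    (fun _ => exists_append_singleton_prefix_drop hs hd hX hocc) hi₀
  have hocc_b := occ_append_singleton hb
  have hlen : X.length < s.length := by
    have := (hb i₀ hi₀).length_le
    simp only [List.length_append, List.length_singleton, List.length_drop] at this
    omega
  obtain ⟨V, hr', ho', hl'⟩ :=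
    exists_rightMax_extension hs hd (X ++ [b]) (by simp) (hocc_b ▸ hocc)
  exact ⟨b :: V, by simpa using hr', by simpa [hocc_b] using ho',
    fun hl => by simpa using hl' (leftMax_append_singleton hb hl)⟩
termination_by s.length - X.length
decreasing_by simp only [List.length_append, List.length_singleton]; omega

end Repeats

theorem extend_to_maximal_repeat_general {α : Type*} [DecidableEq α]
    (T W : List α) (hash dol : α)
    (hh : hash ∉ T) (hd : dol ∉ T) (hhd : hash ≠ dol)
    (hW : W ≠ [])
    (hocc : 2 ≤ occ (hash :: T ++ [dol]) W) :
    ∃ U V : List α,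
      leftMax (hash :: T ++ [dol]) (U ++ W ++ V) ∧
      rightMax (hash :: T ++ [dol]) (U ++ W ++ V) ∧
      occ (hash :: T ++ [dol]) (U ++ W ++ V) = occ (hash :: T ++ [dol]) W := by
  obtain ⟨V, hrV, hoV, -⟩ := exists_rightMax_extension (y := hash :: T) rfl
    (by simp [hhd.symm, hd]) W hW hocc
  obtain ⟨U, hrU, hoU, hlU⟩ := exists_rightMax_extension (s := (hash :: T ++ [dol]).reverse)
    (y := dol :: T.reverse) (d := hash) (by simp) (by simp [hhd, hh]) (W ++ V).reverse
    (by simp [hW])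
    (by rwa [occ_reverse, hoV])
  have hrev : (U.reverse ++ W ++ V).reverse = (W ++ V).reverse ++ U := by simp
  refine ⟨U.reverse, V, ?_, ?_, ?_⟩
  · rw [← rightMax_reverse, hrev]
    exact hrU
  · rw [← leftMax_reverse, hrev]
    exact hlU (leftMax_reverse.2 hrV)
  · rw [← occ_reverse, hrev, hoU, occ_reverse, hoV]

/-- with `T' = # · T · $`, every nonempty `W` over `Σ` occurring
at least twice in `T'` extends to a maximal repeat `UWV` with the same number
of occurrences. -/
theorem extend_to_maximal_repeat {α : Type*} [DecidableEq α]
    (T W : List α) (hash dol : α)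
    (hh : hash ∉ T) (hd : dol ∉ T) (hhd : hash ≠ dol)
    (hW : W ≠ []) (hWsig : ∀ x ∈ W, x ≠ hash ∧ x ≠ dol)
    (hocc : 2 ≤ occ (hash :: T ++ [dol]) W) :
    ∃ U V : List α,
      leftMax (hash :: T ++ [dol]) (U ++ W ++ V) ∧
      rightMax (hash :: T ++ [dol]) (U ++ W ++ V) ∧
      occ (hash :: T ++ [dol]) (U ++ W ++ V) = occ (hash :: T ++ [dol]) W :=
  extend_to_maximal_repeat_general T W hash dol hh hd hhd hW hocc
end

section
/- Let T' = T·$ where $ does not occur in T and |T| = n. The number of distinct maximal repeats of T' is at most n. -/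
private lemma getq_of_pref {α : Type*} {L W : List α} {b : α} {i : ℕ}
    (h : (W ++ [b]) <+: L.drop i) : L[i + W.length]? = some b := by
  obtain ⟨t, ht⟩ := h
  have h1 : L[i + W.length]? = (L.drop i)[W.length]? := by
    rw [List.getElem?_drop]
  rw [h1, ← ht, List.append_assoc, List.getElem?_append_right le_rfl]
  simp

private lemma infix_exists_drop {α : Type*} {X L : List α} (h : X <:+: L) :
    ∃ i, X <+: L.drop i := by
  obtain ⟨s, t, h⟩ := h
  exact ⟨s.length, t, by rw [← h, List.append_assoc, List.drop_left]⟩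

private theorem rightMax_finite_card {α : Type*} (L : List α) :
    {W : List α | rightMax L W}.Finite ∧
      {W : List α | rightMax L W}.ncard ≤ L.length - 1 := by
  classical
  set P : List α → ℕ → Prop := fun W i => ∃ b, (W ++ [b]) <+: L.drop i with hPdef
  set m : List α → ℕ := fun W => sInf {i | P W i} with hmdef
  set g : List α → ℕ := fun W =>
    sInf {i | P W i ∧ L[i + W.length]? ≠ L[m W + W.length]?} with hgdef
  have hPle : ∀ W i, P W i → i + 1 ≤ L.length := by
    rintro W i ⟨b, hb⟩
    have h2 := hb.length_le
    simp [List.length_drop] at h2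
    omega
  have hmem : ∀ W, rightMax L W →
      P W (m W) ∧ (P W (g W) ∧ L[g W + W.length]? ≠ L[m W + W.length]?) := by
    rintro W ⟨b, c, hbc, hWb, hWc⟩
    obtain ⟨i, hi⟩ := infix_exists_drop hWb
    obtain ⟨j, hj⟩ := infix_exists_drop hWc
    have hPne : {i | P W i}.Nonempty := ⟨i, b, hi⟩
    have hm : P W (m W) := Nat.sInf_mem hPne
    obtain ⟨d, hd⟩ := hm
    have hnci : L[i + W.length]? = some b := getq_of_pref hi
    have hncj : L[j + W.length]? = some c := getq_of_pref hj
    have hncm : L[m W + W.length]? = some d := getq_of_pref hd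
    have hgne : {k | P W k ∧ L[k + W.length]? ≠ L[m W + W.length]?}.Nonempty := by
      by_cases h : b = d
      · refine ⟨j, ⟨c, hj⟩, ?_⟩
        rw [hncj, hncm]
        intro hcd
        simp only [Option.some.injEq] at hcd
        exact hbc (h.trans hcd.symm)
      · refine ⟨i, ⟨b, hi⟩, ?_⟩
        rw [hnci, hncm]
        intro hbd
        simp only [Option.some.injEq] at hbd
        exact h hbd
    exact ⟨⟨d, hd⟩, Nat.sInf_mem hgne⟩
  have key : ∀ W ∈ {W | rightMax L W}, ∀ W' ∈ {W | rightMax L W},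
      g W = g W' → W <+: W' → W = W' := by
    intro W hW W' hW' hgg hpre
    by_contra hne
    obtain ⟨u, rfl⟩ := hpre
    cases u with
    | nil => simp at hne
    | cons a u' =>
      obtain ⟨hmW, hgW, hncW⟩ := hmem W hW
      obtain ⟨hmW', hgW', hncW'⟩ := hmem _ hW'
      have stepA : ∀ i, P (W ++ a :: u') i → P W i ∧ L[i + W.length]? = some a := by
        rintro i ⟨b, hb⟩
        have hpa : (W ++ [a]) <+: L.drop i := by
          refine List.IsPrefix.trans ⟨u' ++ [b], ?_⟩ hb
          simp
        exact ⟨⟨a, hpa⟩, getq_of_pref hpa⟩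
      have hPW' : P (W ++ a :: u') (g W) := hgg ▸ hgW'
      have hncg : L[g W + W.length]? = some a := (stepA _ hPW').2
      have hbne : L[m W + W.length]? ≠ some a := fun h => hncW (hncg.trans h.symm)
      have hmW'A := stepA _ hmW'
      have hle1 : g W ≤ m (W ++ a :: u') :=
        Nat.sInf_le ⟨hmW'A.1, by rw [hmW'A.2]; exact fun h => hbne h.symm⟩
      have hle2 : m (W ++ a :: u') ≤ g (W ++ a :: u') := Nat.sInf_le hgW'
      have heq : g (W ++ a :: u') = m (W ++ a :: u') := by omega
      exact hncW' (by rw [heq])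
  have hinj : Set.InjOn g {W | rightMax L W} := by
    intro W hW W' hW' hgg
    obtain ⟨-, ⟨b1, hb1⟩, -⟩ := hmem W hW
    obtain ⟨-, ⟨b2, hb2⟩, -⟩ := hmem W' hW'
    have h1 : W <+: L.drop (g W) := (List.prefix_append W [b1]).trans hb1
    have h2 : W' <+: L.drop (g W) := hgg ▸ (List.prefix_append W' [b2]).trans hb2
    rcases List.prefix_or_prefix_of_prefix h1 h2 with h | h
    · exact key W hW W' hW' hgg h
    · exact (key W' hW' W hW hgg.symm h).symm
  have hrange : ∀ W ∈ {W | rightMax L W}, g W ∈ Set.Icc 1 (L.length - 1) := by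
    intro W hW
    obtain ⟨hmW, hgW, hncW⟩ := hmem W hW
    have h1 : m W ≤ g W := Nat.sInf_le hgW
    have h2 : m W ≠ g W := fun h => hncW (by rw [h])
    have h3 := hPle W (g W) hgW
    exact ⟨by omega, by omega⟩
  have himg : g '' {W | rightMax L W} ⊆ Set.Icc 1 (L.length - 1) := by
    rintro x ⟨W, hW, rfl⟩; exact hrange W hW
  have hfin : {W : List α | rightMax L W}.Finite :=
    Set.Finite.of_finite_image ((Set.finite_Icc _ _).subset himg) hinj
  refine ⟨hfin, ?_⟩
  calc {W : List α | rightMax L W}.ncard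
      = (g '' {W | rightMax L W}).ncard := (Set.ncard_image_of_injOn hinj).symm
    _ ≤ (Set.Icc 1 (L.length - 1)).ncard :=
        Set.ncard_le_ncard himg (Set.finite_Icc _ _)
    _ = L.length - 1 := by
        rw [← Finset.coe_Icc, Set.ncard_coe_finset, Nat.card_Icc]; omega

/-- with `T' = T · $` and `|T| = n`, the set of maximal repeats
of `T'` is finite and has at most `n` elements. -/
theorem card_maximal_repeats_le {α : Type*} (T : List α) (dol : α)
    (hd : dol ∉ T) :
    {W : List α | leftMax (T ++ [dol]) W ∧ rightMax (T ++ [dol]) W}.Finite ∧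
    {W : List α | leftMax (T ++ [dol]) W ∧ rightMax (T ++ [dol]) W}.ncard ≤
      T.length := by
  obtain ⟨hfin, hcard⟩ := rightMax_finite_card (T ++ [dol])
  have hsub : {W : List α | leftMax (T ++ [dol]) W ∧ rightMax (T ++ [dol]) W} ⊆
      {W : List α | rightMax (T ++ [dol]) W} := fun W hW => hW.2
  refine ⟨hfin.subset hsub, ?_⟩
  have hle := Set.ncard_le_ncard hsub hfin
  simp only [List.length_append, List.length_cons, List.length_nil] at hcard
  omega
end
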